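/- arXiv:2505.21819 — 3 statements merged into one kernel-verified Lean document; each statement's English description precedes it below -/
import Mathlib

section
/- Let p be a probability mass function on ℕ and let S ⊆ ℕ be a set whose complement Sᶜ is finite. If ∑_{i ∈ S} p(i) > α · |Sᶜ| for some α ≥ 0, then there is no probability mass function q on ℕ such that q(i) = 0 for all i ∈ S and |q(i) - p(i)| ≤ α for all i ∈ ℕ. -/
/-! Since `q` vanishes on `S`, all of its unit mass sits on the finite set `Sᶜ`, where `q ≤ p + α`
pointwise. Hence `1 ≤ ∑_{Sᶜ} p + α |Sᶜ| = 1 - ∑_S p + α |Sᶜ|`, contradicting `∑_S p > α |Sᶜ|`. -/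

theorem tsum_le_tsum_subtype_add_mul_ncard {ι : Type*} {p q : ι → ℝ} {T : Set ι} {α : ℝ}
    (hT : T.Finite) (hq : ∀ i ∉ T, q i = 0) (hqp : ∀ i ∈ T, q i ≤ p i + α) :
    ∑' i, q i ≤ ∑' i : T, p i + α * T.ncard := by
  have hq' : ∀ i ∉ hT.toFinset, q i = 0 := fun i hi => hq i (by simpa using hi)
  calc ∑' i, q i = ∑ i ∈ hT.toFinset, q i := tsum_eq_sum hq'
    _ ≤ ∑ i ∈ hT.toFinset, (p i + α) :=
        Finset.sum_le_sum fun i hi => hqp i (hT.mem_toFinset.mp hi)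
    _ = ∑' i : T, p i + α * T.ncard := by
        rw [Finset.sum_add_distrib, Finset.sum_const, nsmul_eq_mul, mul_comm,
          Set.ncard_eq_toFinset_card T hT, ← Finset.tsum_subtype', hT.coe_toFinset]

theorem summable_of_tsum_ne_zero {ι M : Type*} [AddCommMonoid M] [TopologicalSpace M] {f : ι → M}
    (hf : ∑' i, f i ≠ 0) : Summable f := by
  by_contra h
  exact hf (tsum_eq_zero_of_not_summable h)

theorem stmt1_general (p : ℕ → ℝ) (hpsum : ∑' i, p i = 1)
    (S : Set ℕ) (hfin : Sᶜ.Finite) (α : ℝ)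
    (hmass : α * (Sᶜ.ncard : ℝ) < ∑' i : S, p i) :
    ¬ ∃ q : ℕ → ℝ, (∀ i, 0 ≤ q i) ∧ (∑' i, q i = 1) ∧
      (∀ i ∈ S, q i = 0) ∧ (∀ i, |q i - p i| ≤ α) := by
  rintro ⟨q, -, hq1, hqS, hqp⟩
  have hp : Summable p := summable_of_tsum_ne_zero (by rw [hpsum]; exact one_ne_zero)
  have hsplit : ∑' i : S, p i + ∑' i : ↥Sᶜ, p i = 1 :=
    hpsum ▸ (hp.subtype _).tsum_add_tsum_compl (hp.subtype _)
  have hbound : ∑' i, q i ≤ ∑' i : ↥Sᶜ, p i + α * Sᶜ.ncard :=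
    tsum_le_tsum_subtype_add_mul_ncard hfin (fun i hi => hqS i (by simpa using hi))
      fun i _ => by linarith [(abs_le.mp (hqp i)).2]
  linarith

theorem stmt1 (p : ℕ → ℝ) (hpnn : ∀ i, 0 ≤ p i) (hpsum : ∑' i, p i = 1)
    (S : Set ℕ) (hfin : Sᶜ.Finite) (α : ℝ) (hα : 0 ≤ α)
    (hmass : α * (Sᶜ.ncard : ℝ) < ∑' i : S, p i) :
    ¬ ∃ q : ℕ → ℝ, (∀ i, 0 ≤ q i) ∧ (∑' i, q i = 1) ∧
      (∀ i ∈ S, q i = 0) ∧ (∀ i, |q i - p i| ≤ α) :=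
  stmt1_general p hpsum S hfin α hmass
end

section
/- Let p be a probability mass function on ℕ, let S ⊆ ℕ, and let α > 0. Suppose (1) p(i) ≤ α for every i ∈ S, and (2) ∑_{i ∈ S} p(i) ≤ α · |ℕ \ S| (where the right-hand side is interpreted as +∞ if ℕ \ S is infinite, and S ≠ ℕ). Then there exists a probability mass function q on ℕ with q(i) = 0 for all i ∈ S and |q(i) - p(i)| ≤ α for all i ∈ ℕ. -/
/-!
Keep `p` off `S` and spread the mass `M = ∑_{i ∈ S} p i` evenly over a finite set `T ⊆ Sᶜ`
with `M ≤ α · #T`; such a `T` exists, by hypothesis when `Sᶜ` is finite and by taking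
`⌈M / α⌉` points when it is infinite. Each share `M / #T` is then at most `α`.
-/

open Finset

lemma Set.exists_finset_subset_le_mul_card {ι : Type*} {s : Set ι} {M α : ℝ} (hα : 0 < α)
    (h : s.Finite → M ≤ α * s.ncard) : ∃ T : Finset ι, ↑T ⊆ s ∧ M ≤ α * #T := by
  by_cases hs : s.Finite
  · exact ⟨hs.toFinset, by simp, by simpa [Set.ncard_eq_toFinset_card _ hs] using h hs⟩
  · obtain ⟨T, hTs, hT⟩ := Set.Infinite.exists_subset_card_eq hs ⌈M / α⌉₊
    exact ⟨T, hTs, hT ▸ (div_le_iff₀' hα).mp (Nat.le_ceil _)⟩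

lemma Finset.exists_hasSum_of_le_mul_card {ι : Type*} (T : Finset ι) {M α : ℝ} (hM : 0 ≤ M)
    (hα : 0 ≤ α) (hMT : M ≤ α * #T) :
    ∃ f : ι → ℝ, (∀ i, 0 ≤ f i ∧ f i ≤ α) ∧ (∀ i ∉ T, f i = 0) ∧ HasSum f M := by
  have hmass : #T * (M / #T) = M := by
    rcases (#T).eq_zero_or_pos with hT | hT
    · simp [hT, le_antisymm (by simpa [hT] using hMT) hM]
    · exact mul_div_cancel₀ M (by positivity)
  have hshare : 0 ≤ M / #T ∧ M / #T ≤ α :=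
    ⟨by positivity, div_le_of_le_mul₀ (by positivity) hα hMT⟩
  refine ⟨Set.indicator T fun _ => M / #T, fun i => ⟨?_, ?_⟩,
    fun i hi => Set.indicator_of_notMem hi _, ?_⟩
  · exact Set.indicator_nonneg (fun _ _ => hshare.1) i
  · exact Set.indicator_apply_le' (fun _ => hshare.2) (fun _ => hα)
  · have hsum : ∑ i ∈ T, Set.indicator T (fun _ => M / #T) i = M := by
      rw [Finset.sum_congr rfl fun i hi => Set.indicator_of_mem (Finset.mem_coe.mpr hi) _]
      simp [hmass]
    have := hasSum_sum_of_ne_finset_zero (L := .unconditional ι) (s := T)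
      (f := Set.indicator T fun _ => M / #T) fun i hi => Set.indicator_of_notMem hi _
    rwa [hsum] at this

theorem stmt2_general (p : ℕ → ℝ) (hpnn : ∀ i, 0 ≤ p i) (hpsum : ∑' i, p i = 1)
    (S : Set ℕ) (α : ℝ) (hα : 0 < α)
    (h1 : ∀ i ∈ S, p i ≤ α)
    (h2 : Sᶜ.Finite → ∑' i : S, p i ≤ α * (Sᶜ.ncard : ℝ)) :
    ∃ q : ℕ → ℝ, (∀ i, 0 ≤ q i) ∧ (∑' i, q i = 1) ∧
      (∀ i ∈ S, q i = 0) ∧ (∀ i, |q i - p i| ≤ α) := by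
  have hp : HasSum p 1 := by
    by_cases hsum : Summable p
    · exact hpsum ▸ hsum.hasSum
    · simp [tsum_eq_zero_of_not_summable hsum] at hpsum
  set M := ∑' i : S, p i
  have hpS : HasSum (S.indicator p) M :=
    hasSum_subtype_iff_indicator.mp (hp.summable.subtype S).hasSum
  obtain ⟨T, hTS, hMT⟩ := Set.exists_finset_subset_le_mul_card hα h2
  obtain ⟨f, hf, hfT, hfM⟩ :=
    T.exists_hasSum_of_le_mul_card (tsum_nonneg fun i : S => hpnn i) hα.le hMT
  have hfS : ∀ i ∈ S, f i = 0 := fun i hi => hfT i fun hiT => hTS hiT hi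
  refine ⟨Sᶜ.indicator p + f, fun i => ?_, ?_, fun i hi => by simp [hi, hfS i hi], fun i => ?_⟩
  · exact add_nonneg (Set.indicator_nonneg (fun i _ => hpnn i) i) (hf i).1
  · have hpSc : HasSum (Sᶜ.indicator p) (1 - M) := Set.indicator_compl S p ▸ hp.sub hpS
    exact (hpSc.add hfM).tsum_eq.trans (sub_add_cancel 1 M)
  · by_cases hi : i ∈ S
    · simpa [hi, hfS i hi, abs_of_nonneg (hpnn i)] using h1 i hi
    · simpa [hi, abs_of_nonneg (hf i).1] using (hf i).2

theorem stmt2 (p : ℕ → ℝ) (hpnn : ∀ i, 0 ≤ p i) (hpsum : ∑' i, p i = 1)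
    (S : Set ℕ) (α : ℝ) (hα : 0 < α)
    (h1 : ∀ i ∈ S, p i ≤ α)
    (hSne : S ≠ Set.univ)
    (h2 : Sᶜ.Finite → ∑' i : S, p i ≤ α * (Sᶜ.ncard : ℝ)) :
    ∃ q : ℕ → ℝ, (∀ i, 0 ≤ q i) ∧ (∑' i, q i = 1) ∧
      (∀ i ∈ S, q i = 0) ∧ (∀ i, |q i - p i| ≤ α) :=
  stmt2_general p hpnn hpsum S α hα h1 h2
end

section
/- Let X be a countable set, H = {h₁, h₂, …} a countable family of functions X → {0,1}, and fix h = h_n ∈ H. Let x₁, x₂, … be an enumeration of supp(h) = {x : h(x)=1}. Then there exists t ∈ ℕ with t ≥ n such that for all s ≥ t: {x₁,…,x_s} ⊆ supp(h), and for every i < n with {x₁,…,x_s} ⊆ supp(h_i), we have supp(h) ⊆ supp(h_i). In other words, h is a critical hypothesis at every step s ≥ t. -/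
open Filter

/-- Some element of `range x` outside `S` is enumerated at a finite time, after which no prefix
of `x` fits in `S`. -/
theorem eventually_forall_lt_mem_imp_range_subset {X : Type*} (x : ℕ → X) (S : Set X) :
    ∀ᶠ s in atTop, (∀ j < s, x j ∈ S) → Set.range x ⊆ S := by
  by_cases hS : Set.range x ⊆ S
  · exact Eventually.of_forall fun _ _ => hS
  obtain ⟨_, ⟨j, rfl⟩, hj⟩ := Set.not_subset.1 hS
  filter_upwards [eventually_gt_atTop j] with s hjs hprefix
  exact absurd (hprefix j hjs) hj

theorem eventually_forall_lt_forall_lt_mem_imp_range_subset {X : Type*} (x : ℕ → X)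
    (S : ℕ → Set X) (n : ℕ) :
    ∀ᶠ s in atTop, ∀ i < n, (∀ j < s, x j ∈ S i) → Set.range x ⊆ S i := by
  simpa only [Finset.mem_range] using (eventually_all_finset (Finset.range n)).2
    fun i _ => eventually_forall_lt_mem_imp_range_subset x (S i)

theorem stmt5_general {X : Type*} (h : ℕ → X → Bool) (n : ℕ) (x : ℕ → X)
    (henum : Set.range x = {y | h n y = true}) :
    ∃ t : ℕ, n ≤ t ∧ ∀ s, t ≤ s →
      ((∀ j < s, h n (x j) = true) ∧
        ∀ i < n, (∀ j < s, h i (x j) = true) →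
          {y | h n y = true} ⊆ {y | h i y = true}) := by
  have hcritical := eventually_forall_lt_forall_lt_mem_imp_range_subset x
    (fun i => {y | h i y = true}) n
  rw [henum] at hcritical
  obtain ⟨t, ht⟩ := eventually_atTop.1 hcritical
  exact ⟨max t n, le_max_right t n, fun s hs =>
    ⟨fun j _ => henum.subset (Set.mem_range_self j), ht s (le_of_max_le_left hs)⟩⟩

theorem stmt5 {X : Type*} [Countable X] (h : ℕ → X → Bool) (n : ℕ) (x : ℕ → X)
    (henum : Set.range x = {y | h n y = true}) :
    ∃ t : ℕ, n ≤ t ∧ ∀ s, t ≤ s →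
      ((∀ j < s, h n (x j) = true) ∧
        ∀ i < n, (∀ j < s, h i (x j) = true) →
          {y | h n y = true} ⊆ {y | h i y = true}) :=
  stmt5_general h n x henum
end
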